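/- Let C be a code on n neurons and D a code on m neurons, and let C ⊔ D be the code on n + m neurons whose codewords are the codewords of C (on the first n indices) together with the codewords of D (shifted to the last m indices). Then for every d ≥ 1, C ⊔ D has a closed convex realization in ℝ^d if and only if both C and D have closed convex realizations in ℝ^d. Consequently cdim(C ⊔ D) = max{cdim(C), cdim(D)}. -/

import Mathlib

open Set

noncomputable section

/-- Euclidean space `ℝ^d`. -/
abbrev Euc (d : ℕ) : Type := EuclideanSpace ℝ (Fin d)

/-- The code of a collection of sets `U = (U 0, …, U (n-1))` in `ℝ^d`. -/
def codeOf {n d : ℕ} (U : Fin n → Set (Euc d)) : Set (Finset (Fin n)) :=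
  {σ | ∃ p : Euc d, ∀ i : Fin n, p ∈ U i ↔ i ∈ σ}

/-- `U` is an open convex realization of the code `C`. -/
def IsOpenReal {n d : ℕ} (C : Set (Finset (Fin n))) (U : Fin n → Set (Euc d)) : Prop :=
  (∀ i, Convex ℝ (U i)) ∧ (∀ i, IsOpen (U i)) ∧ codeOf U = C

/-- `X` is a closed convex realization of the code `C`. -/
def IsClosedReal {n d : ℕ} (C : Set (Finset (Fin n))) (X : Fin n → Set (Euc d)) : Prop :=
  (∀ i, Convex ℝ (X i)) ∧ (∀ i, IsClosed (X i)) ∧ codeOf X = C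

/-- `C` has an open convex realization in `ℝ^d`. -/
def HasOpenReal {n : ℕ} (C : Set (Finset (Fin n))) (d : ℕ) : Prop :=
  ∃ U : Fin n → Set (Euc d), IsOpenReal C U

/-- `C` has a closed convex realization in `ℝ^d`. -/
def HasClosedReal {n : ℕ} (C : Set (Finset (Fin n))) (d : ℕ) : Prop :=
  ∃ X : Fin n → Set (Euc d), IsClosedReal C X

/-- `U` is a non-degenerate open convex realization of `C`: it is an open convex
realization and the closures of its sets realize the same code. -/
def IsNondegOpenReal {n d : ℕ} (C : Set (Finset (Fin n))) (U : Fin n → Set (Euc d)) : Prop :=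
  IsOpenReal C U ∧ codeOf (fun i => closure (U i)) = C

/-- `X` is a non-degenerate closed convex realization of `C`: it is a closed convex
realization and the interiors of its sets realize the same code. -/
def IsNondegClosedReal {n d : ℕ} (C : Set (Finset (Fin n))) (X : Fin n → Set (Euc d)) : Prop :=
  IsClosedReal C X ∧ codeOf (fun i => interior (X i)) = C

/-- `C` has a non-degenerate (open or closed) convex realization in `ℝ^d`. -/
def HasNondegReal {n : ℕ} (C : Set (Finset (Fin n))) (d : ℕ) : Prop :=
  (∃ U : Fin n → Set (Euc d), IsNondegOpenReal C U) ∨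
  (∃ X : Fin n → Set (Euc d), IsNondegClosedReal C X)

/-- Open embedding dimension (`⊤` if no open convex realization exists). -/
def odim {n : ℕ} (C : Set (Finset (Fin n))) : ℕ∞ :=
  sInf {e : ℕ∞ | ∃ d : ℕ, e = d ∧ HasOpenReal C d}

/-- Closed embedding dimension (`⊤` if no closed convex realization exists). -/
def cdim {n : ℕ} (C : Set (Finset (Fin n))) : ℕ∞ :=
  sInf {e : ℕ∞ | ∃ d : ℕ, e = d ∧ HasClosedReal C d}

/-- Non-degenerate embedding dimension (`⊤` if no non-degenerate realization exists). -/
def nddim {n : ℕ} (C : Set (Finset (Fin n))) : ℕ∞ :=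
  sInf {e : ℕ∞ | ∃ d : ℕ, e = d ∧ HasNondegReal C d}

/-- Embedding of `Fin n` into the first `n` indices of `Fin (n + m)`. -/
def finLeftEmb (n m : ℕ) : Fin n ↪ Fin (n + m) :=
  ⟨fun i => ⟨i.1, Nat.lt_of_lt_of_le i.2 (Nat.le_add_right n m)⟩,
    fun a b h => by apply Fin.ext; simpa using congrArg Fin.val h⟩

/-- Embedding of `Fin m` into the last `m` indices of `Fin (n + m)`. -/
def finRightEmb (n m : ℕ) : Fin m ↪ Fin (n + m) :=
  ⟨fun i => ⟨n + i.1, Nat.add_lt_add_left i.2 n⟩,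
    fun a b h => by apply Fin.ext; have := congrArg Fin.val h; simpa using this⟩

/-- The disjoint union `C ⊔ D` of a code on `n` neurons (on the first `n` indices)
and a code on `m` neurons (shifted to the last `m` indices). -/
def codeSum {n m : ℕ} (C : Set (Finset (Fin n))) (D : Set (Finset (Fin m))) :
    Set (Finset (Fin (n + m))) :=
  {τ | ∃ σ ∈ C, τ = σ.map (finLeftEmb n m)} ∪ {τ | ∃ σ ∈ D, τ = σ.map (finRightEmb n m)}

/-!
A realization of `C ⊔ D` restricts to realizations of `C` and `D`: every codeword of the sum lives
in one of the two halves, so the other half only ever sees the codeword `∅`, which lies in `C` and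
in `D`. Conversely, realizations of `C` and `D` may be cut down to a ball containing a witness of
every codeword (the points cut off carry the codeword `∅`). Translating the realization of `D` far
away from that of `C`, the two families together realize `C ⊔ D`, the codeword `∅` being witnessed
by a point outside both balls. In `ℝ⁰` the only point has codeword `∅`, so all sets are empty and
no translation is needed. As realizability is upward closed in the dimension, the equality of
closed embedding dimensions follows.
-/

open Function Bornology Metric

section FinSum

variable {n m : ℕ}

@[simp]
lemma coe_finLeftEmb : ⇑(finLeftEmb n m) = Fin.castAdd m := rfl

@[simp]
lemma coe_finRightEmb : ⇑(finRightEmb n m) = Fin.natAdd n := rfl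

@[simp]
lemma Fin.castAdd_ne_natAdd (i : Fin n) (j : Fin m) : Fin.castAdd m i ≠ Fin.natAdd n j := by
  simp only [ne_eq, Fin.ext_iff, Fin.val_castAdd, Fin.val_natAdd]
  omega

@[simp]
lemma Fin.natAdd_ne_castAdd (i : Fin n) (j : Fin m) : Fin.natAdd n j ≠ Fin.castAdd m i :=
  (Fin.castAdd_ne_natAdd i j).symm

lemma disjoint_range_finLeftEmb_finRightEmb :
    Disjoint (range (finLeftEmb n m)) (range (finRightEmb n m)) := by
  simp [Set.disjoint_iff_forall_ne]

end FinSum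

open Classical in
def codeword {n d : ℕ} (X : Fin n → Set (Euc d)) (p : Euc d) : Finset (Fin n) :=
  Finset.univ.filter fun i => p ∈ X i

section Codeword

variable {n m d : ℕ}

@[simp]
lemma mem_codeword {X : Fin n → Set (Euc d)} {p : Euc d} {i : Fin n} :
    i ∈ codeword X p ↔ p ∈ X i := by
  simp [codeword]

lemma codeword_eq_empty_iff {X : Fin n → Set (Euc d)} {p : Euc d} :
    codeword X p = ∅ ↔ p ∉ ⋃ i, X i := by
  simp [Finset.eq_empty_iff_forall_notMem]

lemma codeOf_eq_range (X : Fin n → Set (Euc d)) : codeOf X = range (codeword X) := by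
  ext σ
  simp only [codeOf, mem_ofPred_eq, mem_range, Finset.ext_iff, mem_codeword]

lemma codeOf_preimage {d' : ℕ} (X : Fin n → Set (Euc d)) {f : Euc d' → Euc d}
    (hf : Surjective f) : codeOf (fun i => f ⁻¹' X i) = codeOf X := by
  simp only [codeOf_eq_range, ← hf.range_comp]
  rfl

lemma codeOf_comp {k : ℕ} (Z : Fin n → Set (Euc d)) {f : Fin k → Fin n} (hf : Injective f) :
    codeOf (Z ∘ f) = (fun τ => τ.preimage f hf.injOn) '' codeOf Z := by
  simp only [codeOf_eq_range, ← range_comp]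
  congr! 2 with p
  ext i
  simp

lemma codeOf_inter {X : Fin n → Set (Euc d)} {K : Set (Euc d)} (hX : ∅ ∈ codeOf X)
    (hK : ∀ σ ∈ codeOf X, ∃ p ∈ K, codeword X p = σ) :
    codeOf (fun i => X i ∩ K) = codeOf X := by
  have hcodeword : ∀ p ∈ K, codeword (fun i => X i ∩ K) p = codeword X p := by
    intro p hp
    ext i
    simp [hp]
  rw [codeOf_eq_range]
  apply Subset.antisymm
  · rintro _ ⟨p, rfl⟩
    by_cases hp : p ∈ K
    · rw [hcodeword p hp, codeOf_eq_range]
      exact mem_range_self p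
    · convert hX
      ext i
      simp [hp]
  · intro σ hσ
    obtain ⟨p, hpK, rfl⟩ := hK σ hσ
    exact ⟨p, hcodeword p hpK⟩

lemma codeword_append (X : Fin n → Set (Euc d)) (Y : Fin m → Set (Euc d)) (p : Euc d) :
    codeword (Fin.append X Y) p =
      (codeword X p).map (finLeftEmb n m) ∪ (codeword Y p).map (finRightEmb n m) := by
  ext k
  induction k using Fin.addCases <;> simp

end Codeword

lemma image_preimage_map_union {α β γ : Type*} {f : α ↪ γ} {g : β ↪ γ}
    (hfg : Disjoint (range f) (range g)) {C : Set (Finset α)} (hC : ∅ ∈ C)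
    (D : Set (Finset β)) :
    (fun τ => τ.preimage f f.injective.injOn) ''
      ({τ | ∃ σ ∈ C, τ = σ.map f} ∪ {τ | ∃ σ ∈ D, τ = σ.map g}) = C := by
  apply Subset.antisymm
  · rintro _ ⟨τ, ⟨σ, hσ, rfl⟩ | ⟨σ, -, rfl⟩, rfl⟩
    · simpa only [Finset.preimage_map]
    · convert hC
      ext a
      simpa using fun b _ => (hfg.ne_of_mem (mem_range_self a) (mem_range_self b)).symm
  · intro σ hσ
    exact ⟨_, Or.inl ⟨σ, hσ, rfl⟩, Finset.preimage_map f σ⟩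

section CodeSum

variable {n m d : ℕ} {C : Set (Finset (Fin n))} {D : Set (Finset (Fin m))}

lemma codeOf_comp_finLeftEmb {Z : Fin (n + m) → Set (Euc d)} (hC : ∅ ∈ C)
    (hZ : codeOf Z = codeSum C D) : codeOf (Z ∘ finLeftEmb n m) = C := by
  rw [codeOf_comp Z (finLeftEmb n m).injective, hZ]
  exact image_preimage_map_union disjoint_range_finLeftEmb_finRightEmb hC D

lemma codeOf_comp_finRightEmb {Z : Fin (n + m) → Set (Euc d)} (hD : ∅ ∈ D)
    (hZ : codeOf Z = codeSum C D) : codeOf (Z ∘ finRightEmb n m) = D := by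
  rw [codeOf_comp Z (finRightEmb n m).injective, hZ, codeSum, union_comm]
  exact image_preimage_map_union disjoint_range_finLeftEmb_finRightEmb.symm hD C

lemma codeOf_append {X : Fin n → Set (Euc d)} {Y : Fin m → Set (Euc d)}
    (hdisj : Disjoint (⋃ i, X i) (⋃ j, Y j)) (hout : (⋃ i, X i) ∪ (⋃ j, Y j) ≠ univ) :
    codeOf (Fin.append X Y) = codeSum (codeOf X) (codeOf Y) := by
  have hempty : ∀ p, codeword X p = ∅ ∨ codeword Y p = ∅ := by
    intro p
    simp only [codeword_eq_empty_iff, ← not_and_or]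
    exact fun h => hdisj.ne_of_mem h.1 h.2 rfl
  obtain ⟨q, hq⟩ := (ne_univ_iff_exists_notMem _).1 hout
  rw [mem_union, not_or, ← codeword_eq_empty_iff, ← codeword_eq_empty_iff] at hq
  simp only [codeOf_eq_range, codeSum]
  ext τ
  constructor
  · rintro ⟨p, rfl⟩
    rcases hempty p with h | h
    · exact Or.inr ⟨_, mem_range_self p, by simp [codeword_append, h]⟩
    · exact Or.inl ⟨_, mem_range_self p, by simp [codeword_append, h]⟩
  · rintro (⟨_, ⟨p, rfl⟩, rfl⟩ | ⟨_, ⟨p, rfl⟩, rfl⟩) <;> rcases hempty p with h | h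
    · exact ⟨q, by simp [codeword_append, hq.1, hq.2, h]⟩
    · exact ⟨p, by simp [codeword_append, h]⟩
    · exact ⟨p, by simp [codeword_append, h]⟩
    · exact ⟨q, by simp [codeword_append, hq.1, hq.2, h]⟩

end CodeSum

lemma exists_disjoint_preimage_add {E : Type*} [NormedAddCommGroup E] [NormedSpace ℝ E]
    [Nontrivial E] {A B : Set E} (hA : IsBounded A) (hB : IsBounded B) :
    ∃ v : E, Disjoint A ((v + ·) ⁻¹' B) ∧ A ∪ (v + ·) ⁻¹' B ≠ univ := by
  obtain ⟨R, hR0, hR⟩ := (hA.union hB).subset_closedBall_lt 0 0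
  obtain ⟨v, hv⟩ := exists_norm_eq E (by positivity : 0 ≤ 3 * R)
  have hA' : A ⊆ closedBall 0 R := subset_union_left.trans hR
  have hB' : (v + ·) ⁻¹' B ⊆ closedBall (-v) R := fun p hp => by
    simpa [dist_eq_norm, add_comm] using hR (Or.inr hp)
  refine ⟨v, (closedBall_disjoint_closedBall ?_).mono hA' hB',
    fun h => NormedSpace.unbounded_univ ℝ E ?_⟩
  · rw [dist_zero_left, norm_neg, hv]
    linarith
  · rw [← h]
    exact (isBounded_closedBall.union isBounded_closedBall).subset (union_subset_union hA' hB')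

lemma iUnion_eq_empty_of_empty_mem_codeOf {n d : ℕ} [Subsingleton (Euc d)]
    {X : Fin n → Set (Euc d)} (h : ∅ ∈ codeOf X) : ⋃ i, X i = ∅ := by
  rw [codeOf_eq_range] at h
  obtain ⟨p, hp⟩ := h
  exact eq_empty_of_forall_notMem fun q => Subsingleton.elim p q ▸ codeword_eq_empty_iff.1 hp

section ClosedRealization

variable {n m d : ℕ} {C : Set (Finset (Fin n))} {D : Set (Finset (Fin m))}

lemma IsClosedReal.comp_finLeftEmb {Z : Fin (n + m) → Set (Euc d)} (hC : ∅ ∈ C)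
    (hZ : IsClosedReal (codeSum C D) Z) : IsClosedReal C (Z ∘ finLeftEmb n m) :=
  ⟨fun _ => hZ.1 _, fun _ => hZ.2.1 _, codeOf_comp_finLeftEmb hC hZ.2.2⟩

lemma IsClosedReal.comp_finRightEmb {Z : Fin (n + m) → Set (Euc d)} (hD : ∅ ∈ D)
    (hZ : IsClosedReal (codeSum C D) Z) : IsClosedReal D (Z ∘ finRightEmb n m) :=
  ⟨fun _ => hZ.1 _, fun _ => hZ.2.1 _, codeOf_comp_finRightEmb hD hZ.2.2⟩

lemma IsClosedReal.affine_preimage {d' : ℕ} {X : Fin n → Set (Euc d)} (hX : IsClosedReal C X)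
    {f : Euc d' →ᵃ[ℝ] Euc d} (hf : Surjective f) : IsClosedReal C (fun i => f ⁻¹' X i) :=
  ⟨fun i => (hX.1 i).affine_preimage f,
    fun i => (hX.2.1 i).preimage f.continuous_of_finiteDimensional,
    (codeOf_preimage X hf).trans hX.2.2⟩

lemma IsClosedReal.exists_inter_closedBall {X : Fin n → Set (Euc d)} (hC : ∅ ∈ C)
    (hX : IsClosedReal C X) : ∃ R, IsClosedReal C (fun i => X i ∩ closedBall 0 R) := by
  obtain ⟨hconv, hclosed, rfl⟩ := hX
  choose w hw using fun σ : codeOf X => (codeOf_eq_range X ▸ σ.2 : σ.1 ∈ range (codeword X))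
  obtain ⟨R, hR⟩ := (finite_range w).isBounded.subset_closedBall 0
  refine ⟨R, fun i => (hconv i).inter (convex_closedBall 0 R),
    fun i => (hclosed i).inter isClosed_closedBall, codeOf_inter hC fun σ hσ => ?_⟩
  exact ⟨w ⟨σ, hσ⟩, hR (mem_range_self _), hw _⟩

lemma IsClosedReal.append {X : Fin n → Set (Euc d)} {Y : Fin m → Set (Euc d)}
    (hX : IsClosedReal C X) (hY : IsClosedReal D Y) (hdisj : Disjoint (⋃ i, X i) (⋃ j, Y j))
    (hout : (⋃ i, X i) ∪ (⋃ j, Y j) ≠ univ) : IsClosedReal (codeSum C D) (Fin.append X Y) := by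
  refine ⟨fun k => ?_, fun k => ?_, ?_⟩
  · induction k using Fin.addCases <;> simp [hX.1, hY.1]
  · induction k using Fin.addCases <;> simp [hX.2.1, hY.2.1]
  · rw [codeOf_append hdisj hout, hX.2.2, hY.2.2]

lemma hasClosedReal_mono : Monotone (HasClosedReal C) := by
  rintro d d' h ⟨X, hX⟩
  let e := fun k => WithLp.linearEquiv 2 ℝ (Fin k → ℝ)
  let π : Euc d' →ₗ[ℝ] Euc d :=
    (e d).symm.toLinearMap ∘ₗ LinearMap.funLeft ℝ ℝ (Fin.castLE h) ∘ₗ (e d').toLinearMap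
  have hπ : Surjective π := (e d).symm.surjective.comp <|
    (LinearMap.funLeft_surjective_of_injective ℝ ℝ _ (Fin.castLE_injective h)).comp
      (e d').surjective
  exact ⟨_, hX.affine_preimage (f := π.toAffineMap) hπ⟩

lemma HasClosedReal.codeSum (hC : ∅ ∈ C) (hD : ∅ ∈ D) (hCd : HasClosedReal C d)
    (hDd : HasClosedReal D d) : HasClosedReal (codeSum C D) d := by
  obtain ⟨X, hX⟩ := hCd
  obtain ⟨Y, hY⟩ := hDd
  cases d with
  | zero =>
    have hXe := iUnion_eq_empty_of_empty_mem_codeOf (hX.2.2 ▸ hC)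
    have hYe := iUnion_eq_empty_of_empty_mem_codeOf (hY.2.2 ▸ hD)
    exact ⟨_, hX.append hY (by simp [hXe]) (by simpa [hXe, hYe] using empty_ne_univ)⟩
  | succ k =>
    obtain ⟨R, hXR⟩ := hX.exists_inter_closedBall hC
    obtain ⟨R', hYR⟩ := hY.exists_inter_closedBall hD
    obtain ⟨v, hdisj, hout⟩ := exists_disjoint_preimage_add
      (A := ⋃ i, X i ∩ closedBall 0 R) (B := ⋃ j, Y j ∩ closedBall 0 R')
      (isBounded_closedBall.subset (iUnion_subset fun i => inter_subset_right))
      (isBounded_closedBall.subset (iUnion_subset fun j => inter_subset_right))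
    let τ := (AffineEquiv.constVAdd ℝ (Euc (k + 1)) v).toAffineMap
    refine ⟨_, hXR.append (hYR.affine_preimage (f := τ) (AffineEquiv.surjective _)) ?_ ?_⟩
    · rw [← preimage_iUnion]
      exact hdisj
    · rw [← preimage_iUnion]
      exact hout

theorem hasClosedReal_codeSum_iff (hC : ∅ ∈ C) (hD : ∅ ∈ D) (d : ℕ) :
    HasClosedReal (codeSum C D) d ↔ HasClosedReal C d ∧ HasClosedReal D d :=
  ⟨fun ⟨_, hZ⟩ => ⟨⟨_, hZ.comp_finLeftEmb hC⟩, ⟨_, hZ.comp_finRightEmb hD⟩⟩,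
    fun ⟨hCd, hDd⟩ => hCd.codeSum hC hD hDd⟩

end ClosedRealization

lemma ENat.sInf_setOf_natCast_and {P Q : ℕ → Prop} (hP : Monotone P) (hQ : Monotone Q) :
    sInf {e : ℕ∞ | ∃ d : ℕ, e = d ∧ P d ∧ Q d} =
      max (sInf {e : ℕ∞ | ∃ d : ℕ, e = d ∧ P d}) (sInf {e : ℕ∞ | ∃ d : ℕ, e = d ∧ Q d}) := by
  refine le_antisymm ?_ (max_le (sInf_le_sInf ?_) (sInf_le_sInf ?_))
  · rw [sInf_sup_eq]
    refine le_iInf₂ fun _ ⟨a, ha, hPa⟩ => ?_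
    rw [sup_sInf_eq]
    refine le_iInf₂ fun _ ⟨b, hb, hQb⟩ => ?_
    subst ha hb
    exact sInf_le ⟨max a b, Nat.mono_cast.map_max.symm, hP (le_max_left a b) hPa,
      hQ (le_max_right a b) hQb⟩
  · rintro _ ⟨d, rfl, hd, -⟩
    exact ⟨d, rfl, hd⟩
  · rintro _ ⟨d, rfl, -, hd⟩
    exact ⟨d, rfl, hd⟩

/-- `C ⊔ D` has a closed convex realization in `ℝ^d` iff both `C` and `D` do;
consequently `cdim (C ⊔ D) = max (cdim C) (cdim D)`. -/
theorem codeSum_closed {n m : ℕ} (C : Set (Finset (Fin n))) (D : Set (Finset (Fin m)))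
    (hC : ∅ ∈ C) (hD : ∅ ∈ D) :
    (∀ d : ℕ, 1 ≤ d → (HasClosedReal (codeSum C D) d ↔ HasClosedReal C d ∧ HasClosedReal D d)) ∧
    cdim (codeSum C D) = max (cdim C) (cdim D) := by
  refine ⟨fun d _ => hasClosedReal_codeSum_iff hC hD d, ?_⟩
  unfold cdim
  simp only [hasClosedReal_codeSum_iff hC hD]
  exact ENat.sInf_setOf_natCast_and hasClosedReal_mono hasClosedReal_mono

end
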